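/- Let s, t ∈ O* be two schedules such that s ~ t. Then for every operation o and every occurrence index i with i at most the multiplicity of o in s, ret*(o^(i), s) = ret*(o^(i), t); that is, the return value of every operation occurrence is invariant across equivalent schedules. -/

import Mathlib

open Classical

universe u v w

/-- Operations `a` and `b` commute in state `q`. -/
def CommuteIn {Q : Type u} {O : Type v} {R : Type w}
    (σ : O → Q → R × Q) (a b : O) (q : Q) : Prop :=
  ∃ (ra rb : R) (q1 q2 q' : Q),
    σ a q = (ra, q1) ∧ σ b q1 = (rb, q') ∧ σ b q = (rb, q2) ∧ σ a q2 = (ra, q')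

/-- Operations `a` and `b` conflict: they fail to commute in some state. -/
def Conflict {Q : Type u} {O : Type v} {R : Type w}
    (σ : O → Q → R × Q) (a b : O) : Prop :=
  ∃ q : Q, ¬ CommuteIn σ a b q

/-- Position in `s` of the `i`-th (0-indexed) occurrence of `o`, if it exists. -/
noncomputable def occIdx {O : Type v} (s : List O) (o : O) (i : ℕ) : Option ℕ :=
  ((List.range s.length).filter (fun k => decide (s[k]? = some o)))[i]?

/-- The `i`-th occurrence of `a` precedes the `j`-th occurrence of `b` in `s`. -/
def Precedes {O : Type v} (s : List O) (a : O) (i : ℕ) (b : O) (j : ℕ) : Prop :=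
  ∃ p q : ℕ, occIdx s a i = some p ∧ occIdx s b j = some q ∧ p < q

/-- Schedule equivalence: same multiset of operations, and the relative order of
any two occurrences of conflicting operations is the same. -/
def ScheduleEquiv {Q : Type u} {O : Type v} {R : Type w}
    (σ : O → Q → R × Q) (s s' : List O) : Prop :=
  (↑s : Multiset O) = (↑s' : Multiset O) ∧
  ∀ (a b : O) (i j : ℕ), Conflict σ a b →
    (Precedes s a i b j ↔ Precedes s' a i b j)

/-- `~` is an equivalence relation (proved here to form the quotient). -/
def scheduleSetoid {Q : Type u} {O : Type v} {R : Type w}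
    (σ : O → Q → R × Q) : Setoid (List O) :=
  ⟨ScheduleEquiv σ,
    ⟨fun _ => ⟨rfl, fun _ _ _ _ _ => Iff.rfl⟩,
     fun h => ⟨h.1.symm, fun a b i j hc => (h.2 a b i j hc).symm⟩,
     fun h h' => ⟨h.1.trans h'.1, fun a b i j hc => (h.2 a b i j hc).trans (h'.2 a b i j hc)⟩⟩⟩

/-- Traces: equivalence classes of schedules. -/
def Trace {Q : Type u} {O : Type v} {R : Type w} (σ : O → Q → R × Q) :=
  Quotient (scheduleSetoid σ)

/-- Prefix order on traces. -/
def TraceLe {Q : Type u} {O : Type v} {R : Type w}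
    (σ : O → Q → R × Q) (x y : Trace σ) : Prop :=
  ∃ s u : List O, x = Quotient.mk (scheduleSetoid σ) s ∧
    y = Quotient.mk (scheduleSetoid σ) (s ++ u)

/-- Executing a schedule from state `q`. -/
def execTrace {Q : Type u} {O : Type v} {R : Type w}
    (σ : O → Q → R × Q) : List O → Q → List (R × Q)
  | [], _ => []
  | o :: s, q => (σ o q) :: execTrace σ s (σ o q).2

/-- Return value of the `i`-th (0-indexed) occurrence of `o` in `s`,
executed from the initial state `q0`. -/
noncomputable def retStar {Q : Type u} {O : Type v} {R : Type w}
    (σ : O → Q → R × Q) (q0 : Q) (o : O) (i : ℕ) (s : List O) : Option R :=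
  (occIdx s o i).bind fun k => ((execTrace σ s q0)[k]?).map Prod.fst
section Aux
variable {Q : Type u} {O : Type v} {R : Type w}

theorem occIdx_nil (o : O) (i : ℕ) : occIdx ([] : List O) o i = none := rfl

theorem filter_range_cons (x : O) (s : List O) (o : O) :
    (List.range (x::s).length).filter (fun k => decide ((x::s)[k]? = some o)) =
    (if x = o then [0] else []) ++
      ((List.range s.length).filter (fun k => decide (s[k]? = some o))).map Nat.succ := by
  have h1 : List.range (x::s).length = 0 :: (List.range s.length).map Nat.succ := by
    simp [List.range_succ_eq_map]
  rw [h1, List.filter_cons]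
  have h2 : ((List.range s.length).map Nat.succ).filter (fun k => decide ((x::s)[k]? = some o))
      = ((List.range s.length).filter (fun k => decide (s[k]? = some o))).map Nat.succ := by
    rw [List.filter_map]
    have : ((fun k => decide ((x :: s)[k]? = some o)) ∘ Nat.succ)
        = (fun k => decide (s[k]? = some o)) := by
      funext k
      simp only [Function.comp_apply, Nat.succ_eq_add_one, List.getElem?_cons_succ]
    rw [this]
  rw [h2]
  by_cases hx : x = o <;> simp [hx]

theorem occIdx_cons_self_zero (a : O) (s : List O) :
    occIdx (a::s) a 0 = some 0 := by
  unfold occIdx; rw [filter_range_cons]; simp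

theorem occIdx_cons_self_succ (a : O) (s : List O) (i : ℕ) :
    occIdx (a::s) a (i+1) = (occIdx s a i).map Nat.succ := by
  unfold occIdx; rw [filter_range_cons]
  simp [List.getElem?_map]

theorem occIdx_cons_ne (x : O) (s : List O) (o : O) (h : x ≠ o) (i : ℕ) :
    occIdx (x::s) o i = (occIdx s o i).map Nat.succ := by
  unfold occIdx; rw [filter_range_cons]
  simp [h, List.getElem?_map]

theorem occIdx_isSome_iff [DecidableEq O] (s : List O) (o : O) (i : ℕ) :
    (occIdx s o i).isSome ↔ i < s.count o := by
  induction s generalizing i with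
  | nil => simp [occIdx_nil]
  | cons x s ih =>
    by_cases hx : x = o
    · subst hx
      cases i with
      | zero => simp [occIdx_cons_self_zero, List.count_cons_self, Nat.succ_pos]
      | succ i => simp [occIdx_cons_self_succ, ih, List.count_cons_self, Nat.succ_lt_succ_iff]
    · simp [occIdx_cons_ne x s o hx, ih, List.count_cons_of_ne hx, Ne.symm hx]

theorem occIdx_cons_shift (x o : O) (s : List O) (i : ℕ) (h : ¬(o = x ∧ i = 0)) :
    occIdx (x::s) o i = (occIdx s o (if x = o then i - 1 else i)).map Nat.succ := by
  by_cases hx : x = o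
  · subst hx
    cases i with
    | zero => exact absurd ⟨rfl, rfl⟩ h
    | succ i => rw [occIdx_cons_self_succ]; simp
  · rw [occIdx_cons_ne x s o hx i, if_neg hx]

theorem precedes_cons_iff (x b c : O) (s : List O) (i j : ℕ)
    (hb : ¬(b = x ∧ i = 0)) (hc : ¬(c = x ∧ j = 0)) :
    Precedes (x::s) b i c j ↔
      Precedes s b (if x = b then i - 1 else i) c (if x = c then j - 1 else j) := by
  constructor
  · rintro ⟨p, q, h1, h2, h3⟩
    rw [occIdx_cons_shift x b s i hb] at h1
    rw [occIdx_cons_shift x c s j hc] at h2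
    obtain ⟨p', hp', rfl⟩ := Option.map_eq_some_iff.mp h1
    obtain ⟨q', hq', rfl⟩ := Option.map_eq_some_iff.mp h2
    exact ⟨p', q', hp', hq', Nat.lt_of_succ_lt_succ h3⟩
  · rintro ⟨p, q, h1, h2, h3⟩
    refine ⟨p+1, q+1, ?_, ?_, Nat.succ_lt_succ h3⟩
    · rw [occIdx_cons_shift x b s i hb, h1]; rfl
    · rw [occIdx_cons_shift x c s j hc, h2]; rfl

theorem precedes_cons_head (x c : O) (s : List O) (j : ℕ) :
    Precedes (x::s) x 0 c j ↔
      ((occIdx s c (if x = c then j - 1 else j)).isSome ∧ ¬(c = x ∧ j = 0)) := by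
  constructor
  · rintro ⟨p, q, h1, h2, h3⟩
    rw [occIdx_cons_self_zero] at h1
    obtain rfl : (0 : ℕ) = p := by injection h1
    by_cases hc : c = x ∧ j = 0
    · obtain ⟨rfl, rfl⟩ := hc
      rw [occIdx_cons_self_zero] at h2
      obtain rfl : (0 : ℕ) = q := by injection h2
      omega
    · rw [occIdx_cons_shift x c s j hc] at h2
      obtain ⟨q', hq', rfl⟩ := Option.map_eq_some_iff.mp h2
      exact ⟨Option.isSome_iff_exists.mpr ⟨q', hq'⟩, hc⟩
  · rintro ⟨h1, h2⟩
    obtain ⟨q', hq'⟩ := Option.isSome_iff_exists.mp h1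
    refine ⟨0, q' + 1, occIdx_cons_self_zero x s, ?_, Nat.succ_pos q'⟩
    rw [occIdx_cons_shift x c s j h2, hq']; rfl

theorem not_precedes_cons_headR (x b : O) (s : List O) (i : ℕ) (hb : ¬(b = x ∧ i = 0)) :
    ¬ Precedes (x::s) b i x 0 := by
  rintro ⟨p, q, h1, h2, h3⟩
  rw [occIdx_cons_self_zero] at h2
  obtain rfl : (0 : ℕ) = q := by injection h2
  rw [occIdx_cons_shift x b s i hb] at h1
  obtain ⟨p', hp', rfl⟩ := Option.map_eq_some_iff.mp h1
  omega

end Aux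
section Aux2
variable {Q : Type u} {O : Type v} {R : Type w}

theorem commuteIn_symm {σ : O → Q → R × Q} {a b : O} {q : Q}
    (h : CommuteIn σ a b q) : CommuteIn σ b a q := by
  obtain ⟨ra, rb, q1, q2, q', h1, h2, h3, h4⟩ := h
  exact ⟨rb, ra, q2, q1, q', h3, h4, h1, h2⟩

theorem conflict_symm {σ : O → Q → R × Q} {a b : O}
    (h : Conflict σ a b) : Conflict σ b a := by
  obtain ⟨q, hq⟩ := h
  exact ⟨q, fun hc => hq (commuteIn_symm hc)⟩

theorem scheduleEquiv_refl (σ : O → Q → R × Q) (s : List O) : ScheduleEquiv σ s s :=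
  ⟨rfl, fun _ _ _ _ _ => Iff.rfl⟩

theorem scheduleEquiv_trans {σ : O → Q → R × Q} {s t u : List O}
    (h1 : ScheduleEquiv σ s t) (h2 : ScheduleEquiv σ t u) : ScheduleEquiv σ s u :=
  ⟨h1.1.trans h2.1, fun a b i j hc => (h1.2 a b i j hc).trans (h2.2 a b i j hc)⟩

theorem count_eq_of_scheduleEquiv [DecidableEq O] {σ : O → Q → R × Q} {s t : List O}
    (h : ScheduleEquiv σ s t) (o : O) : s.count o = t.count o := by
  have := h.1
  rw [Multiset.coe_eq_coe] at this
  exact this.count_eq o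

theorem scheduleEquiv_cons (σ : O → Q → R × Q) (x : O) {s t : List O}
    (h : ScheduleEquiv σ s t) : ScheduleEquiv σ (x::s) (x::t) := by
  classical
  constructor
  · have := h.1
    rw [Multiset.coe_eq_coe] at this ⊢
    exact this.cons x
  · intro a b i j hc
    by_cases hA : a = x ∧ i = 0
    · obtain ⟨rfl, rfl⟩ := hA
      rw [precedes_cons_head, precedes_cons_head]
      have : (occIdx s b (if a = b then j - 1 else j)).isSome
          ↔ (occIdx t b (if a = b then j - 1 else j)).isSome := by
        rw [occIdx_isSome_iff, occIdx_isSome_iff, count_eq_of_scheduleEquiv h]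
      rw [this]
    · by_cases hB : b = x ∧ j = 0
      · obtain ⟨rfl, rfl⟩ := hB
        exact iff_of_false (not_precedes_cons_headR b a s i hA)
          (not_precedes_cons_headR b a t i hA)
      · rw [precedes_cons_iff x a b s i j hA hB, precedes_cons_iff x a b t i j hA hB]
        exact h.2 a b _ _ hc

theorem scheduleEquiv_tail {σ : O → Q → R × Q} {x : O} {s t : List O}
    (h : ScheduleEquiv σ (x::s) (x::t)) : ScheduleEquiv σ s t := by
  constructor
  · have := h.1
    rw [Multiset.coe_eq_coe] at this ⊢
    exact this.cons_inv
  · intro a b i j hc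
    set I := if x = a then i + 1 else i with hI
    set J := if x = b then j + 1 else j with hJ
    have hA : ¬(a = x ∧ I = 0) := by
      rintro ⟨rfl, hI0⟩
      rw [hI] at hI0
      simp at hI0
    have hB : ¬(b = x ∧ J = 0) := by
      rintro ⟨rfl, hJ0⟩
      rw [hJ] at hJ0
      simp at hJ0
    have hIi : (if x = a then I - 1 else I) = i := by
      by_cases hxa : x = a <;> simp [hxa, hI]
    have hJj : (if x = b then J - 1 else J) = j := by
      by_cases hxb : x = b <;> simp [hxb, hJ]
    have e1 := precedes_cons_iff x a b s I J hA hB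
    have e2 := precedes_cons_iff x a b t I J hA hB
    rw [hIi, hJj] at e1 e2
    rw [← e1, ← e2]
    exact h.2 a b I J hc

end Aux2
section Aux3
variable {Q : Type u} {O : Type v} {R : Type w}

theorem occIdx_swap (c a o : O) (w : List O) (i : ℕ)
    (h1 : ¬(o = c ∧ i = 0)) (h2 : ¬(o = a ∧ i = 0)) :
    occIdx (c::a::w) o i = occIdx (a::c::w) o i := by
  by_cases hca : c = a
  · subst hca; rfl
  · have e1 : occIdx (c::a::w) o i
        = (occIdx (a::w) o (if c = o then i - 1 else i)).map Nat.succ :=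
      occIdx_cons_shift c o (a::w) i h1
    have h1' : ¬(o = a ∧ (if c = o then i - 1 else i) = 0) := by
      rintro ⟨rfl, hz⟩
      rw [if_neg hca] at hz
      exact h2 ⟨rfl, hz⟩
    rw [e1, occIdx_cons_shift a o w _ h1']
    have e2 : occIdx (a::c::w) o i
        = (occIdx (c::w) o (if a = o then i - 1 else i)).map Nat.succ :=
      occIdx_cons_shift a o (c::w) i h2
    have h2' : ¬(o = c ∧ (if a = o then i - 1 else i) = 0) := by
      rintro ⟨rfl, hz⟩
      rw [if_neg (fun hh => hca hh.symm)] at hz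
      exact h1 ⟨rfl, hz⟩
    rw [e2, occIdx_cons_shift c o w _ h2']
    congr 2
    by_cases hc : c = o <;> by_cases ha : a = o <;> simp [hc, ha]

theorem occIdx_two_le (c a o : O) (w : List O) (i p : ℕ) (hca : c ≠ a)
    (h1 : ¬(o = c ∧ i = 0)) (h2 : ¬(o = a ∧ i = 0))
    (hp : occIdx (c::a::w) o i = some p) : 2 ≤ p := by
  rw [occIdx_cons_shift c o (a::w) i h1] at hp
  obtain ⟨p', hp', rfl⟩ := Option.map_eq_some_iff.mp hp
  have h1' : ¬(o = a ∧ (if c = o then i - 1 else i) = 0) := by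
    rintro ⟨rfl, hz⟩
    rw [if_neg hca] at hz
    exact h2 ⟨rfl, hz⟩
  rw [occIdx_cons_shift a o w _ h1'] at hp'
  obtain ⟨p'', hp'', rfl⟩ := Option.map_eq_some_iff.mp hp'
  omega

theorem scheduleEquiv_swap (σ : O → Q → R × Q) (c a : O) (w : List O)
    (h : ¬ Conflict σ a c) : ScheduleEquiv σ (c::a::w) (a::c::w) := by
  by_cases hca : c = a
  · subst hca; exact scheduleEquiv_refl σ _
  constructor
  · rw [Multiset.coe_eq_coe]
    exact List.Perm.swap a c w
  · intro b d i j hc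
    have hL_c0 : occIdx (c::a::w) c 0 = some 0 := occIdx_cons_self_zero c (a::w)
    have hL_a0 : occIdx (c::a::w) a 0 = some 1 := by
      rw [occIdx_cons_ne c (a::w) a hca, occIdx_cons_self_zero]; rfl
    have hR_a0 : occIdx (a::c::w) a 0 = some 0 := occIdx_cons_self_zero a (c::w)
    have hR_c0 : occIdx (a::c::w) c 0 = some 1 := by
      rw [occIdx_cons_ne a (c::w) c (fun hh => hca hh.symm), occIdx_cons_self_zero]; rfl
    by_cases hb1 : b = c ∧ i = 0
    · obtain ⟨rfl, rfl⟩ := hb1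
      -- now the former c is named b
      by_cases hd1 : d = b ∧ j = 0
      · obtain ⟨rfl, rfl⟩ := hd1
        constructor
        · rintro ⟨p, q, e1, e2, e3⟩
          rw [hL_c0] at e1 e2; injection e1 with e1; injection e2 with e2; omega
        · rintro ⟨p, q, e1, e2, e3⟩
          rw [hR_c0] at e1 e2; injection e1 with e1; injection e2 with e2; omega
      · by_cases hd2 : d = a ∧ j = 0
        · obtain ⟨rfl, rfl⟩ := hd2
          exact absurd (conflict_symm hc) h
        · constructor
          · rintro ⟨p, q, e1, e2, e3⟩
            refine ⟨1, q, hR_c0, ?_, ?_⟩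
            · rw [← occIdx_swap b a d w j hd1 hd2]; exact e2
            · have := occIdx_two_le b a d w j q hca hd1 hd2 e2
              omega
          · rintro ⟨p, q, e1, e2, e3⟩
            refine ⟨0, q, hL_c0, ?_, ?_⟩
            · rw [occIdx_swap b a d w j hd1 hd2]; exact e2
            · rw [← occIdx_swap b a d w j hd1 hd2] at e2
              have := occIdx_two_le b a d w j q hca hd1 hd2 e2
              omega
    · by_cases hb2 : b = a ∧ i = 0
      · obtain ⟨rfl, rfl⟩ := hb2
        -- now the former a is named b
        by_cases hd1 : d = c ∧ j = 0
        · obtain ⟨rfl, rfl⟩ := hd1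
          exact absurd hc h
        · by_cases hd2 : d = b ∧ j = 0
          · obtain ⟨rfl, rfl⟩ := hd2
            constructor
            · rintro ⟨p, q, e1, e2, e3⟩
              rw [hL_a0] at e1 e2; injection e1 with e1; injection e2 with e2; omega
            · rintro ⟨p, q, e1, e2, e3⟩
              rw [hR_a0] at e1 e2; injection e1 with e1; injection e2 with e2; omega
          · constructor
            · rintro ⟨p, q, e1, e2, e3⟩
              refine ⟨0, q, hR_a0, ?_, ?_⟩
              · rw [← occIdx_swap c b d w j hd1 hd2]; exact e2
              · have := occIdx_two_le c b d w j q hca hd1 hd2 e2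
                omega
            · rintro ⟨p, q, e1, e2, e3⟩
              refine ⟨1, q, hL_a0, ?_, ?_⟩
              · rw [occIdx_swap c b d w j hd1 hd2]; exact e2
              · rw [← occIdx_swap c b d w j hd1 hd2] at e2
                have := occIdx_two_le c b d w j q hca hd1 hd2 e2
                omega
      · by_cases hd1 : d = c ∧ j = 0
        · obtain ⟨rfl, rfl⟩ := hd1
          -- former c is named d
          constructor
          · rintro ⟨p, q, e1, e2, e3⟩
            rw [hL_c0] at e2; injection e2 with e2
            have := occIdx_two_le d a b w i p hca hb1 hb2 e1
            omega
          · rintro ⟨p, q, e1, e2, e3⟩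
            rw [hR_c0] at e2; injection e2 with e2
            rw [← occIdx_swap d a b w i hb1 hb2] at e1
            have := occIdx_two_le d a b w i p hca hb1 hb2 e1
            omega
        · by_cases hd2 : d = a ∧ j = 0
          · obtain ⟨rfl, rfl⟩ := hd2
            -- former a is named d
            constructor
            · rintro ⟨p, q, e1, e2, e3⟩
              rw [hL_a0] at e2; injection e2 with e2
              have := occIdx_two_le c d b w i p hca hb1 hb2 e1
              omega
            · rintro ⟨p, q, e1, e2, e3⟩
              rw [hR_a0] at e2; injection e2 with e2
              rw [← occIdx_swap c d b w i hb1 hb2] at e1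
              have := occIdx_two_le c d b w i p hca hb1 hb2 e1
              omega
          · unfold Precedes
            rw [occIdx_swap c a b w i hb1 hb2, occIdx_swap c a d w j hd1 hd2]

end Aux3
section Aux4
variable {Q : Type u} {O : Type v} {R : Type w}

theorem retStar_cons_head (σ : O → Q → R × Q) (q0 : Q) (a : O) (s : List O) :
    retStar σ q0 a 0 (a::s) = some (σ a q0).1 := by
  unfold retStar
  rw [occIdx_cons_self_zero]
  simp [execTrace]

theorem retStar_cons_shift (σ : O → Q → R × Q) (q0 : Q) (a o : O) (s : List O) (i : ℕ)
    (h : ¬(o = a ∧ i = 0)) :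
    retStar σ q0 o i (a::s) = retStar σ (σ a q0).2 o (if a = o then i - 1 else i) s := by
  unfold retStar
  rw [occIdx_cons_shift a o s i h]
  cases hk : occIdx s o (if a = o then i - 1 else i) with
  | none => simp
  | some k =>
    simp only [Option.map_some, Option.bind_some]
    show ((execTrace σ (a::s) q0)[k+1]?).map Prod.fst = _
    simp [execTrace]

theorem retStar_swap (σ : O → Q → R × Q) (q0 : Q) (c a : O) (w : List O)
    (hcom : CommuteIn σ c a q0) (o : O) (i : ℕ) :
    retStar σ q0 o i (c::a::w) = retStar σ q0 o i (a::c::w) := by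
  by_cases hca : c = a
  · subst hca; rfl
  obtain ⟨rc, ra, q1, q2, q', e1, e2, e3, e4⟩ := hcom
  by_cases h1 : o = c ∧ i = 0
  · obtain ⟨rfl, rfl⟩ := h1
    rw [retStar_cons_head, retStar_cons_shift σ q0 a o (o::w) 0
      (by rintro ⟨rfl, -⟩; exact hca rfl)]
    rw [if_neg (fun hh => hca hh.symm)]
    rw [retStar_cons_head, e1, e3, e4]
  · by_cases h2 : o = a ∧ i = 0
    · obtain ⟨rfl, rfl⟩ := h2
      rw [retStar_cons_head, retStar_cons_shift σ q0 c o (o::w) 0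
        (by rintro ⟨rfl, -⟩; exact hca rfl)]
      rw [if_neg hca]
      rw [retStar_cons_head, e1, e2, e3]
    · rw [retStar_cons_shift σ q0 c o (a::w) i h1]
      have h1' : ¬(o = a ∧ (if c = o then i - 1 else i) = 0) := by
        rintro ⟨rfl, hz⟩
        rw [if_neg hca] at hz
        exact h2 ⟨rfl, hz⟩
      rw [retStar_cons_shift σ _ a o w _ h1']
      rw [retStar_cons_shift σ q0 a o (c::w) i h2]
      have h2' : ¬(o = c ∧ (if a = o then i - 1 else i) = 0) := by
        rintro ⟨rfl, hz⟩
        rw [if_neg (fun hh => hca hh.symm)] at hz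
        exact h1 ⟨rfl, hz⟩
      rw [retStar_cons_shift σ _ c o w _ h2']
      rw [e1, e3]
      have hst : (σ a q1).2 = (σ c q2).2 := by rw [e2, e4]
      rw [hst]
      congr 1
      by_cases hc : c = o <;> by_cases ha : a = o <;> simp [hc, ha]

theorem retStar_bubble (σ : O → Q → R × Q) (a : O) (u v : List O)
    (hcom : ∀ b ∈ u, ∀ q, CommuteIn σ b a q) :
    ∀ (q0 : Q) (o : O) (i : ℕ),
      retStar σ q0 o i (u ++ a :: v) = retStar σ q0 o i (a :: (u ++ v)) := by
  induction u with
  | nil => intro q0 o i; rfl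
  | cons c u' ih =>
    intro q0 o i
    have hstep : ∀ (q : Q) (o : O) (i : ℕ),
        retStar σ q o i (c :: (u' ++ a :: v)) = retStar σ q o i (c :: a :: (u' ++ v)) := by
      intro q o i
      by_cases hh : o = c ∧ i = 0
      · obtain ⟨rfl, rfl⟩ := hh
        rw [retStar_cons_head, retStar_cons_head]
      · rw [retStar_cons_shift σ q c o (u' ++ a :: v) i hh,
          retStar_cons_shift σ q c o (a :: (u' ++ v)) i hh]
        exact ih (fun b hb => hcom b (List.mem_cons_of_mem c hb)) _ o _
    calc retStar σ q0 o i ((c :: u') ++ a :: v)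
        = retStar σ q0 o i (c :: a :: (u' ++ v)) := hstep q0 o i
      _ = retStar σ q0 o i (a :: c :: (u' ++ v)) :=
          retStar_swap σ q0 c a (u' ++ v) (hcom c (List.mem_cons_self (a := c) (l := u')) q0) o i
      _ = retStar σ q0 o i (a :: ((c :: u') ++ v)) := rfl

theorem scheduleEquiv_bubble (σ : O → Q → R × Q) (a : O) (u v : List O)
    (hcon : ∀ b ∈ u, ¬ Conflict σ a b) :
    ScheduleEquiv σ (u ++ a :: v) (a :: (u ++ v)) := by
  induction u with
  | nil => exact scheduleEquiv_refl σ _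
  | cons c u' ih =>
    have h1 : ScheduleEquiv σ (c :: (u' ++ a :: v)) (c :: a :: (u' ++ v)) :=
      scheduleEquiv_cons σ c (ih (fun b hb => hcon b (List.mem_cons_of_mem c hb)))
    have h2 : ScheduleEquiv σ (c :: a :: (u' ++ v)) (a :: c :: (u' ++ v)) :=
      scheduleEquiv_swap σ c a (u' ++ v) (hcon c (List.mem_cons_self (a := c) (l := u')))
    exact scheduleEquiv_trans h1 h2

theorem first_occ_split (a : O) (t : List O) (h : a ∈ t) :
    ∃ u v, t = u ++ a :: v ∧ a ∉ u := by
  induction t with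
  | nil => cases h
  | cons c t' ih =>
    by_cases hc : c = a
    · exact ⟨[], t', by simp [hc], List.not_mem_nil⟩
    · have : a ∈ t' := by
        rcases List.mem_cons.mp h with h' | h'
        · exact absurd h'.symm hc
        · exact h'
      obtain ⟨u, v, rfl, hu⟩ := ih this
      exact ⟨c :: u, v, rfl, by
        intro hmem
        rcases List.mem_cons.mp hmem with h' | h'
        · exact hc h'.symm
        · exact hu h'⟩

theorem occIdx_append_notmem (a : O) (u v : List O) (hu : a ∉ u) :
    occIdx (u ++ a :: v) a 0 = some u.length := by
  induction u with
  | nil => exact occIdx_cons_self_zero a v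
  | cons c u' ih =>
    have hc : c ≠ a := fun hh => hu (hh ▸ List.mem_cons_self (a := c) (l := u'))
    rw [List.cons_append, occIdx_cons_ne c _ a hc,
      ih (fun hh => hu (List.mem_cons_of_mem c hh))]
    rfl

theorem occIdx_zero_lt_of_mem (b : O) (u w : List O) (h : b ∈ u) :
    ∃ q < u.length, occIdx (u ++ w) b 0 = some q := by
  induction u with
  | nil => cases h
  | cons c u' ih =>
    by_cases hc : c = b
    · subst hc
      exact ⟨0, Nat.succ_pos _, occIdx_cons_self_zero c (u' ++ w)⟩
    · have : b ∈ u' := by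
        rcases List.mem_cons.mp h with h' | h'
        · exact absurd h'.symm hc
        · exact h'
      obtain ⟨q, hq, hocc⟩ := ih this
      refine ⟨q + 1, Nat.succ_lt_succ hq, ?_⟩
      rw [List.cons_append, occIdx_cons_ne c _ b hc, hocc]
      rfl

end Aux4
/-- if `s ~ t` then the return value of every operation
occurrence is the same in `s` and `t`. -/
theorem retStar_eq_of_scheduleEquiv
    {Q : Type u} {O : Type v} {R : Type w}
    (σ : O → Q → R × Q) (q0 : Q) (s t : List O)
    (h : ScheduleEquiv σ s t) :
    ∀ (o : O) (i : ℕ), (occIdx s o i).isSome →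
      retStar σ q0 o i s = retStar σ q0 o i t := by
  classical
  induction s generalizing q0 t with
  | nil =>
    intro o i hi
    rw [occIdx_nil] at hi
    simp at hi
  | cons a s' ih =>
    have hcnt : ∀ x, (a::s').count x = t.count x :=
      fun x => count_eq_of_scheduleEquiv h x
    have hat : a ∈ t := by
      have := hcnt a
      rw [List.count_cons_self] at this
      have : 0 < t.count a := by omega
      exact List.count_pos_iff.mp this
    obtain ⟨u, v, rfl, hu⟩ := first_occ_split a t hat
    have hcon : ∀ b ∈ u, ¬ Conflict σ a b := by
      intro b hb hconf
      have hba : b ≠ a := fun hh => hu (hh ▸ hb)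
      have hbt : 0 < (u ++ a :: v).count b :=
        List.count_pos_iff.mpr (List.mem_append_left _ hb)
      have hbs : 0 < s'.count b := by
        have h1 := hcnt b
        rw [List.count_cons_of_ne (Ne.symm hba)] at h1
        omega
      have hP : Precedes (a::s') a 0 b 0 := by
        obtain ⟨q', hq'⟩ := Option.isSome_iff_exists.mp
          ((occIdx_isSome_iff s' b 0).mpr hbs)
        refine ⟨0, q'+1, occIdx_cons_self_zero a s', ?_, Nat.succ_pos _⟩
        rw [occIdx_cons_ne a s' b (Ne.symm hba), hq']; rfl
      obtain ⟨p, q, hp, hq, hlt⟩ := (h.2 a b 0 0 hconf).mp hP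
      rw [occIdx_append_notmem a u v hu] at hp
      obtain ⟨q2, hq2lt, hq2⟩ := occIdx_zero_lt_of_mem b u (a::v) hb
      rw [hq2] at hq
      injection hp with hp
      injection hq with hq
      omega
    have hconsym : ∀ b ∈ u, ∀ q, CommuteIn σ b a q := by
      intro b hb q
      have : CommuteIn σ a b q := by
        by_contra hq
        exact (hcon b hb) ⟨q, hq⟩
      exact commuteIn_symm this
    have hbub_ret : ∀ (q : Q) (o : O) (i : ℕ),
        retStar σ q o i (u ++ a::v) = retStar σ q o i (a :: (u++v)) :=
      retStar_bubble σ a u v hconsym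
    have hbub_eq : ScheduleEquiv σ (u ++ a::v) (a :: (u++v)) :=
      scheduleEquiv_bubble σ a u v hcon
    have htail : ScheduleEquiv σ s' (u ++ v) :=
      scheduleEquiv_tail (scheduleEquiv_trans h hbub_eq)
    intro o i hi
    rw [hbub_ret q0 o i]
    by_cases hh : o = a ∧ i = 0
    · obtain ⟨rfl, rfl⟩ := hh
      rw [retStar_cons_head, retStar_cons_head]
    · have hi' : (occIdx s' o (if a = o then i-1 else i)).isSome := by
        rw [occIdx_cons_shift a o s' i hh] at hi
        simpa using hi
      rw [retStar_cons_shift σ q0 a o s' i hh,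
        retStar_cons_shift σ q0 a o (u++v) i hh]
      exact ih (σ a q0).2 (u++v) htail o _ hi'
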